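/- arXiv:0806.1118 — 7 statements merged into one kernel-verified Lean document; each statement's English description precedes it below -/
import Mathlib

section
/- In the braid group B_3 (generated by a_1, a_2 with relation a_2 a_1 a_2 = a_1 a_2 a_1), for every integer l ≥ 2 the relation a_2 a_1^l a_2 a_1 = a_1 a_2 a_1^2 a_2^{l-1} holds. -/
/-!
The braid relation says exactly that `a₂ a₁` conjugates `a₂` into `a₁`, i.e.
`(a₂ a₁) a₂ = a₁ (a₂ a₁)`, hence `(a₂ a₁) a₂ᵏ = a₁ᵏ (a₂ a₁)` for all `k`. Writing `l = k + 1`,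
`a₂ a₁ˡ a₂ a₁ = a₂ a₁ · a₁ᵏ (a₂ a₁) = (a₂ a₁ a₂) a₁ a₂ᵏ`, and one more braid relation turns this
into `a₁ a₂ a₁² a₂ᵏ`.
-/

theorem semiconjBy_mul_of_braid {M : Type*} [Monoid M] {a b : M} (h : b * a * b = a * b * a) :
    SemiconjBy (b * a) b a := by
  rw [SemiconjBy, h, mul_assoc]

/-- In the braid group B₃ (generated by a₁, a₂ with relation a₂a₁a₂ = a₁a₂a₁),
for every l ≥ 2, a₂ a₁^l a₂ a₁ = a₁ a₂ a₁² a₂^(l-1). -/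
theorem braid3_gs_relation {G : Type*} [Group G] (a1 a2 : G)
    (hbraid : a2 * a1 * a2 = a1 * a2 * a1) (l : ℕ) (hl : 2 ≤ l) :
    a2 * a1 ^ l * a2 * a1 = a1 * a2 * a1 ^ 2 * a2 ^ (l - 1) := by
  obtain ⟨k, rfl⟩ : ∃ k, l = k + 1 := ⟨l - 1, by omega⟩
  calc a2 * a1 ^ (k + 1) * a2 * a1 = a2 * a1 * (a2 * a1 * a2 ^ k) := by
        rw [(semiconjBy_mul_of_braid hbraid).pow_right k, pow_succ']
        simp only [mul_assoc]
    _ = (a2 * a1 * a2) * a1 * a2 ^ k := by simp only [mul_assoc]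
    _ = a1 * a2 * a1 ^ 2 * a2 ^ (k + 1 - 1) := by
        rw [hbraid, pow_two, Nat.add_sub_cancel]
        simp only [mul_assoc]
end

section
/- In the braid group B_{n+1}, for indices j ≤ s ≤ i < n, the Garside formula a_s · (a_{i+1} a_i ⋯ a_j) = (a_{i+1} a_i ⋯ a_j) · a_{s+1} holds, where a_{i+1} a_i ⋯ a_j denotes the descending product of generators from index i+1 down to j. -/
/-- The descending product a_i a_{i-1} ⋯ a_j (equal to 1 if i < j). -/
def descProd {M : Type*} [Monoid M] (a : ℕ → M) (i j : ℕ) : M :=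
  (((List.range' j (i + 1 - j)).reverse).map a).prod

/-!
Split a_{i+1} ⋯ a_j as P · (a_{s+1} a_s) · Q with P = a_{i+1} ⋯ a_{s+2}
and Q = a_{s-1} ⋯ a_j.
Far commutativity lets a_s pass through P and a_{s+1} pass through Q, and the braid relation
a_s (a_{s+1} a_s) = (a_{s+1} a_s) a_{s+1} turns a_s into a_{s+1} in the middle.
-/

section DescProd

variable {M : Type*} [Monoid M] (a : ℕ → M)

theorem descProd_mul_descProd {i j k : ℕ} (hjk : j ≤ k + 1) (hki : k ≤ i) :
    descProd a i (k + 1) * descProd a k j = descProd a i j := by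
  have hrange := List.range'_append_1 (s := j) (m := k + 1 - j) (n := i - k)
  rw [show j + (k + 1 - j) = k + 1 by omega,
    show k + 1 - j + (i - k) = i + 1 - j by omega] at hrange
  unfold descProd
  rw [← List.prod_append, ← List.map_append, ← List.reverse_append,
    show i + 1 - (k + 1) = i - k by omega, hrange]

theorem descProd_self (i : ℕ) : descProd a i i = a i := by
  simp [descProd]

theorem descProd_succ_left {i j : ℕ} (h : j ≤ i + 1) :
    descProd a (i + 1) j = a (i + 1) * descProd a i j := by
  rw [← descProd_mul_descProd a h (Nat.le_succ i), descProd_self]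

theorem descProd_commute {x : M} {i j : ℕ} (h : ∀ k, j ≤ k → k ≤ i → Commute (a k) x) :
    Commute (descProd a i j) x := by
  refine Commute.list_prod_left _ _ fun y hy => ?_
  simp only [List.mem_map, List.mem_reverse, List.mem_range'_1] at hy
  obtain ⟨k, ⟨hjk, hki⟩, rfl⟩ := hy
  exact h k hjk (by omega)

end DescProd

/-- Garside's formula in B_{n+1}: for j ≤ s ≤ i < n,
a_s · (a_{i+1} a_i ⋯ a_j) = (a_{i+1} a_i ⋯ a_j) · a_{s+1}. -/
theorem braid_garside_formula {G : Type*} [Group G] (n : ℕ) (a : ℕ → G)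
    (hbraid : ∀ i, 1 ≤ i → i + 1 ≤ n → a (i + 1) * a i * a (i + 1) = a i * a (i + 1) * a i)
    (hcomm : ∀ i j, 1 ≤ j → j + 2 ≤ i → i ≤ n → a i * a j = a j * a i)
    (i j s : ℕ) (hj : 1 ≤ j) (hjs : j ≤ s) (hsi : s ≤ i) (hin : i + 1 ≤ n) :
    a s * descProd a (i + 1) j = descProd a (i + 1) j * a (s + 1) := by
  obtain ⟨t, rfl⟩ : ∃ t, s = t + 1 := ⟨s - 1, by omega⟩
  have hsplit : descProd a (i + 1) j
      = descProd a (i + 1) (t + 3) * (a (t + 2) * a (t + 1) * descProd a t j) := by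
    rw [← descProd_mul_descProd a (k := t + 2) (by omega) (by omega),
      descProd_succ_left a (i := t + 1) (by omega), descProd_succ_left a (i := t) hjs,
      mul_assoc (a (t + 2))]
  have hfar : Commute (descProd a (i + 1) (t + 3)) (a (t + 1)) :=
    descProd_commute a fun k _ _ => hcomm k (t + 1) (by omega) (by omega) (by omega)
  have hnear : Commute (descProd a t j) (a (t + 2)) :=
    descProd_commute a fun k _ _ => (hcomm (t + 2) k (by omega) (by omega) (by omega)).symm
  have hmiddle : SemiconjBy (a (t + 2) * a (t + 1)) (a (t + 2)) (a (t + 1)) := by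
    simpa only [SemiconjBy, ← mul_assoc] using hbraid (t + 1) (by omega) (by omega)
  rw [hsplit]
  exact (SemiconjBy.mul_left hfar (hmiddle.mul_left hnear)).eq.symm
end

section
/- In the braid group B_3, for all integers l, k ≥ 2, the two ways of rewriting a_2 a_1^l a_2 a_1^k a_2 a_1 using the relations a_2 a_1^m a_2 a_1 = a_1 a_2 a_1^2 a_2^{m-1} (applied to the left occurrence with m = l and to the right occurrence with m = k) yield equal elements; concretely, a_2 a_1^{l+1} a_2 a_1^2 a_2^{k-1} = a_1 a_2 a_1^2 a_2^{l-1} a_1^{k-1} a_2 a_1 in B_3. -/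
/-!
The braid relation says that `a₂ a₁` conjugates `a₂` to `a₁`, hence `a₂^n` to `a₁^n`. This yields
the rewriting rule `a₂ a₁^(m+1) a₂ a₁ = a₁ a₂ a₁² a₂^m`, and both sides of the composition are
obtained from `a₂ a₁^l a₂ a₁^k a₂ a₁` by one application of it, so they coincide.
-/

section BraidRelation

variable {G : Type*} [Group G] {a1 a2 : G}

theorem semiconjBy_of_braid (hbraid : a2 * a1 * a2 = a1 * a2 * a1) :
    SemiconjBy (a2 * a1) a2 a1 := by
  rw [SemiconjBy, hbraid, mul_assoc]

theorem braid_rewrite (hbraid : a2 * a1 * a2 = a1 * a2 * a1) (n : ℕ) :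
    a2 * a1 ^ (n + 1) * a2 * a1 = a1 * a2 * a1 ^ 2 * a2 ^ n := by
  have hconj : a2 * a1 * a2 ^ n = a1 ^ n * (a2 * a1) :=
    ((semiconjBy_of_braid hbraid).pow_right n).eq
  calc a2 * a1 ^ (n + 1) * a2 * a1 = a2 * a1 * (a1 ^ n * (a2 * a1)) := by group
    _ = a2 * a1 * a2 * (a1 * a2 ^ n) := by rw [← hconj]; group
    _ = a1 * a2 * a1 ^ 2 * a2 ^ n := by rw [hbraid, sq]; group

end BraidRelation

/-- In B₃, for l, k ≥ 2:
a₂ a₁^(l+1) a₂ a₁² a₂^(k-1) = a₁ a₂ a₁² a₂^(l-1) a₁^(k-1) a₂ a₁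
(triviality of the composition on the ambiguity a₂ a₁^l a₂ a₁^k a₂ a₁). -/
theorem braid3_composition_trivial {G : Type*} [Group G] (a1 a2 : G)
    (hbraid : a2 * a1 * a2 = a1 * a2 * a1) (l k : ℕ) (hl : 2 ≤ l) (hk : 2 ≤ k) :
    a2 * a1 ^ (l + 1) * a2 * a1 ^ 2 * a2 ^ (k - 1)
      = a1 * a2 * a1 ^ 2 * a2 ^ (l - 1) * a1 ^ (k - 1) * a2 * a1 := by
  obtain ⟨l, rfl⟩ : ∃ l', l = l' + 1 := ⟨l - 1, by omega⟩
  obtain ⟨k, rfl⟩ : ∃ k', k = k' + 1 := ⟨k - 1, by omega⟩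
  simp only [Nat.add_sub_cancel]
  calc a2 * a1 ^ (l + 1 + 1) * a2 * a1 ^ 2 * a2 ^ k
      = a2 * a1 ^ (l + 1) * (a1 * a2 * a1 ^ 2 * a2 ^ k) := by group
    _ = a2 * a1 ^ (l + 1) * a2 * a1 * (a1 ^ k * a2 * a1) := by rw [← braid_rewrite hbraid]; group
    _ = a1 * a2 * a1 ^ 2 * a2 ^ l * a1 ^ k * a2 * a1 := by rw [braid_rewrite hbraid]; group
end

section
/- In the braid group B_4 (generators a_1, a_2, a_3), the relation a_3 a_2^l a_1^m a_3 a_2 a_1 = a_2 a_3 a_2^2 a_1 a_3^{l-1} a_2^m holds for all l ≥ 2 and m ≥ 1. -/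
/-!
Push `a₁ᵐ` to the right past `a₃` (they commute), then use the braid relation in the form
`uᵐ v u = v u vᵐ` twice: for `(u, v) = (a₁, a₂)` it turns `a₁ᵐ a₂ a₁` into `a₂ a₁ a₂ᵐ`, and for
`(u, v) = (a₂, a₃)` it turns `a₂ˡ a₃ a₂` into `a₃ a₂ a₃ˡ`. What remains is `a₃² a₂ a₃ = a₂ a₃ a₂²`
followed by `a₃ˡ⁻¹ a₁ = a₁ a₃ˡ⁻¹`.
-/

section Braid

variable {M : Type*} [Monoid M] {u v : M}

theorem pow_mul_mul_eq_mul_mul_pow_of_braid (h : v * u * v = u * v * u) (m : ℕ) :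
    u ^ m * v * u = v * u * v ^ m := by
  induction m with
  | zero => simp
  | succ n ih =>
    calc u ^ (n + 1) * v * u = u * (u ^ n * v * u) := by simp only [pow_succ', mul_assoc]
      _ = u * v * u * v ^ n := by rw [ih]; simp only [mul_assoc]
      _ = v * u * v ^ (n + 1) := by rw [← h]; simp only [pow_succ', mul_assoc]

theorem sq_mul_mul_eq_mul_mul_sq_of_braid (h : v * u * v = u * v * u) :
    v ^ 2 * u * v = u * v * u ^ 2 := by
  calc v ^ 2 * u * v = v * (v * u * v) := by simp only [sq, mul_assoc]
    _ = v * (u * v * u) := by rw [h]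
    _ = v * u * v * u := by simp only [mul_assoc]
    _ = u * v * u * u := by rw [h]
    _ = u * v * u ^ 2 := by simp only [sq, mul_assoc]

end Braid

theorem braid4_gs_relation_general {G : Type*} [Group G] (a1 a2 a3 : G)
    (h12 : a2 * a1 * a2 = a1 * a2 * a1) (h23 : a3 * a2 * a3 = a2 * a3 * a2)
    (h13 : a3 * a1 = a1 * a3) (l m : ℕ) (hl : 2 ≤ l) :
    a3 * a2 ^ l * a1 ^ m * a3 * a2 * a1
      = a2 * a3 * a2 ^ 2 * a1 * a3 ^ (l - 1) * a2 ^ m := by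
  obtain ⟨k, rfl⟩ : ∃ k, l = k + 1 := ⟨l - 1, by omega⟩
  have h31 : Commute a3 a1 := h13
  rw [Nat.add_sub_cancel]
  calc a3 * a2 ^ (k + 1) * a1 ^ m * a3 * a2 * a1
      = a3 * a2 ^ (k + 1) * a3 * (a1 ^ m * a2 * a1) := by
        rw [mul_assoc _ (a1 ^ m), ← (h31.pow_right m).eq]; group
    _ = a3 * (a2 ^ (k + 1) * a3 * a2) * a1 * a2 ^ m := by
        rw [pow_mul_mul_eq_mul_mul_pow_of_braid h12]; group
    _ = a3 ^ 2 * a2 * a3 * (a3 ^ k * a1) * a2 ^ m := by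
        rw [pow_mul_mul_eq_mul_mul_pow_of_braid h23, sq]; group
    _ = a2 * a3 * a2 ^ 2 * a1 * a3 ^ k * a2 ^ m := by
        rw [(h31.pow_left k).eq, sq_mul_mul_eq_mul_mul_sq_of_braid h23]; group

/-- In B₄ (generators a₁, a₂, a₃), for l ≥ 2 and m ≥ 1:
a₃ a₂^l a₁^m a₃ a₂ a₁ = a₂ a₃ a₂² a₁ a₃^(l-1) a₂^m. -/
theorem braid4_gs_relation {G : Type*} [Group G] (a1 a2 a3 : G)
    (h12 : a2 * a1 * a2 = a1 * a2 * a1) (h23 : a3 * a2 * a3 = a2 * a3 * a2)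
    (h13 : a3 * a1 = a1 * a3) (l m : ℕ) (hl : 2 ≤ l) (hm : 1 ≤ m) :
    a3 * a2 ^ l * a1 ^ m * a3 * a2 * a1
      = a2 * a3 * a2 ^ 2 * a1 * a3 ^ (l - 1) * a2 ^ m :=
  braid4_gs_relation_general a1 a2 a3 h12 h23 h13 l m hl
end

section
/- In the braid group B_3, every element can be written in the form Δ^k v where k is an integer, v is a positive word in a_1, a_2 (possibly empty), and Δ = a_1 a_2 a_1; i.e., the subgroup-generating set {a_1, a_2} together with the invertibility of Δ gives B_3 = ∪_{k∈ℤ} Δ^k B_3^+ where B_3^+ is the submonoid generated by a_1, a_2. -/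
/-- The braid relation of B₃ as a relator in the free group on two generators:
a₂ a₁ a₂ (a₁ a₂ a₁)⁻¹, with a₁ = of false, a₂ = of true. -/
def braid3Rels : Set (FreeGroup Bool) :=
  {FreeGroup.of true * FreeGroup.of false * FreeGroup.of true *
    (FreeGroup.of false * FreeGroup.of true * FreeGroup.of false)⁻¹}

/-- The braid group B₃ presented by generators a₁, a₂ and relation
a₂a₁a₂ = a₁a₂a₁. -/
abbrev Braid3 : Type := PresentedGroup braid3Rels

/-! Conjugation by Δ swaps a₁ and a₂, so it preserves B₃⁺, and therefore the products Δᵏ v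
(k ∈ ℤ, v ∈ B₃⁺) form a submonoid of B₃. This submonoid contains a₁, a₂ and also their inverses,
because Δ a₁⁻¹ = a₁ a₂ and Δ a₂⁻¹ = a₂ a₁ are positive; so it is all of B₃. -/

open Pointwise

section ZpowMul

variable {G : Type*} [Group G]

lemma Submonoid.zpow_mul_mul_zpow_neg_mem {M : Submonoid G} {d : G}
    (hM : MulAut.conj d • M = M) (k : ℤ) {v : G} (hv : v ∈ M) : d ^ k * v * d ^ (-k) ∈ M := by
  have hk : MulAut.conj d ^ k ∈ MulAction.stabilizer (MulAut G) M :=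
    zpow_mem (MulAction.mem_stabilizer_iff.mpr hM) k
  rw [MulAction.mem_stabilizer_iff, ← map_zpow] at hk
  rw [← hk, zpow_neg]
  exact Submonoid.smul_mem_pointwise_smul v _ M hv

def Submonoid.zpowMul (M : Submonoid G) (d : G) (hM : MulAut.conj d • M = M) : Submonoid G where
  carrier := {g | ∃ k : ℤ, ∃ v ∈ M, g = d ^ k * v}
  one_mem' := ⟨0, 1, M.one_mem, by simp⟩
  mul_mem' := by
    rintro _ _ ⟨k, v, hv, rfl⟩ ⟨l, w, hw, rfl⟩
    refine ⟨k + l, d ^ (-l) * v * d ^ (-(-l)) * w,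
      M.mul_mem (M.zpow_mul_mul_zpow_neg_mem hM (-l) hv) hw, ?_⟩
    rw [zpow_add]
    group

theorem exists_zpow_mul_mem_closure {T : Set G} {d : G} (hT : Subgroup.closure T = ⊤)
    (hconj : MulAut.conj d • T = T) (hinv : ∀ s ∈ T, d * s⁻¹ ∈ Submonoid.closure T) (g : G) :
    ∃ k : ℤ, ∃ v ∈ Submonoid.closure T, g = d ^ k * v := by
  have hM : MulAut.conj d • Submonoid.closure T = Submonoid.closure T := by
    rw [Submonoid.smul_closure, hconj]
  suffices (Subgroup.closure T).toSubmonoid ≤ (Submonoid.closure T).zpowMul d hM from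
    this (hT ▸ Subgroup.mem_top g)
  rw [Subgroup.closure_toSubmonoid, Submonoid.closure_le, Set.union_subset_iff]
  constructor
  · exact fun s hs => ⟨0, s, Submonoid.subset_closure hs, by simp⟩
  · intro s hs
    exact ⟨-1, d * s, by simpa using hinv s⁻¹ hs, by group⟩

end ZpowMul

namespace Braid3

abbrev a₁ : Braid3 := PresentedGroup.of false

abbrev a₂ : Braid3 := PresentedGroup.of true

def Δ : Braid3 := a₁ * a₂ * a₁

theorem braid_rel : a₂ * a₁ * a₂ = a₁ * a₂ * a₁ :=
  PresentedGroup.mk_eq_mk_of_mul_inv_mem rfl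

theorem Δ_eq : Δ = a₂ * a₁ * a₂ := braid_rel.symm

theorem a₁_mul_Δ : a₁ * Δ = Δ * a₂ := by
  conv_lhs => rw [Δ_eq]
  rw [Δ]; group

theorem a₂_mul_Δ : a₂ * Δ = Δ * a₁ := by
  conv_rhs => rw [Δ_eq]
  rw [Δ]; group

theorem conj_Δ_smul_generators : MulAut.conj Δ • ({a₁, a₂} : Set Braid3) = {a₁, a₂} := by
  have h₁ : MulAut.conj Δ • a₁ = a₂ := by
    rw [MulAut.smul_def, MulAut.conj_apply, mul_inv_eq_iff_eq_mul, a₂_mul_Δ]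
  have h₂ : MulAut.conj Δ • a₂ = a₁ := by
    rw [MulAut.smul_def, MulAut.conj_apply, mul_inv_eq_iff_eq_mul, a₁_mul_Δ]
  rw [Set.smul_set_insert, Set.smul_set_singleton, h₁, h₂, Set.pair_comm]

theorem closure_generators : Subgroup.closure ({a₁, a₂} : Set Braid3) = ⊤ := by
  rw [← PresentedGroup.closure_range_of braid3Rels]
  congr
  ext g
  simp

theorem Δ_mul_inv_mem_closure :
    ∀ s ∈ ({a₁, a₂} : Set Braid3), Δ * s⁻¹ ∈ Submonoid.closure {a₁, a₂} := by
  have h₁ : a₁ ∈ Submonoid.closure {a₁, a₂} := Submonoid.subset_closure (by simp)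
  have h₂ : a₂ ∈ Submonoid.closure {a₁, a₂} := Submonoid.subset_closure (by simp)
  rintro s (rfl | rfl)
  · simpa [Δ] using Submonoid.mul_mem _ h₁ h₂
  · simpa [Δ_eq] using Submonoid.mul_mem _ h₂ h₁

end Braid3

/-- Every element of B₃ can be written as Δᵏ v with k ∈ ℤ and v a positive word
in a₁, a₂ (an element of the submonoid B₃⁺ generated by a₁ and a₂),
where Δ = a₁ a₂ a₁. -/
theorem braid3_garside_decomposition (g : Braid3) :
    ∃ (k : ℤ) (v : Braid3),
      v ∈ Submonoid.closure
        {PresentedGroup.of (rels := braid3Rels) false,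
         PresentedGroup.of (rels := braid3Rels) true} ∧
      g = (PresentedGroup.of (rels := braid3Rels) false *
            PresentedGroup.of (rels := braid3Rels) true *
            PresentedGroup.of (rels := braid3Rels) false) ^ k * v :=
  exists_zpow_mul_mem_closure Braid3.closure_generators Braid3.conj_Δ_smul_generators
    Braid3.Δ_mul_inv_mem_closure g
end

section
/- In the braid monoid B_{n+1}^+, where Λ_k = a_k a_{k-1} ⋯ a_1, we have a_j Λ_{i+1} = Λ_{i+1} a_{j+1} for all 1 ≤ j ≤ i ≤ n−1. -/
lemma descProd_split {M : Type*} [Monoid M] (a : ℕ → M) {i k j : ℕ}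
    (h1 : j ≤ k + 1) (h2 : k ≤ i) :
    descProd a i j = descProd a i (k + 1) * descProd a k j := by
  unfold descProd
  rw [← List.prod_append, ← List.map_append, ← List.reverse_append]
  congr 2
  have : List.range' j (k + 1 - j) ++ List.range' (k + 1) (i + 1 - (k + 1)) =
      List.range' j (i + 1 - j) := by
    have := @List.range'_append j (k + 1 - j) (i + 1 - (k + 1)) 1
    simp only [Nat.mul_one, one_mul] at this
    rw [Nat.add_sub_cancel' h1] at this
    rw [this]
    congr 1
    omega
  rw [this]

lemma commute_descProd {M : Type*} [Monoid M] (a : ℕ → M) (x : M) {i j : ℕ}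
    (h : ∀ m, j ≤ m → m ≤ i → Commute x (a m)) :
    Commute x (descProd a i j) := by
  apply Commute.list_prod_right
  intro y hy
  simp only [List.mem_map, List.mem_reverse, List.mem_range'] at hy
  obtain ⟨m, ⟨hm1, hm2⟩, rfl⟩ := hy
  exact h m (by omega) (by omega)

/-- In the braid monoid B_{n+1}⁺, for 1 ≤ j ≤ i ≤ n-1:
a_j Λ_{i+1} = Λ_{i+1} a_{j+1}, where Λ_k = a_k a_{k-1} ⋯ a₁. -/
theorem braid_monoid_lambda_shift {M : Type*} [Monoid M] (n : ℕ) (a : ℕ → M)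
    (hbraid : ∀ i, 1 ≤ i → i + 1 ≤ n → a (i + 1) * a i * a (i + 1) = a i * a (i + 1) * a i)
    (hcomm : ∀ i j, 1 ≤ j → j + 2 ≤ i → i ≤ n → a i * a j = a j * a i)
    (i j : ℕ) (hj : 1 ≤ j) (hji : j ≤ i) (hin : i + 1 ≤ n) :
    a j * descProd a (i + 1) 1 = descProd a (i + 1) 1 * a (j + 1) := by
  have hsplit1 : descProd a (i + 1) 1 = descProd a (i + 1) (j + 2) * descProd a (j + 1) 1 :=
    descProd_split a (by omega) (by omega)
  have hsplit2 : descProd a (j + 1) 1 = descProd a (j + 1) j * descProd a (j - 1) 1 := by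
    have := descProd_split a (i := j + 1) (k := j - 1) (j := 1) (by omega) (by omega)
    rwa [show j - 1 + 1 = j by omega] at this
  have hmid : descProd a (j + 1) j = a (j + 1) * a j := by
    unfold descProd
    rw [show j + 1 + 1 - j = 2 by omega]
    simp [List.range'_succ]
  have hc1 : Commute (a j) (descProd a (i + 1) (j + 2)) := by
    apply commute_descProd
    intro m hm1 hm2
    exact (hcomm m j hj (by omega) (by omega)).symm
  have hc2 : Commute (a (j + 1)) (descProd a (j - 1) 1) := by
    apply commute_descProd
    intro m hm1 hm2
    exact hcomm (j + 1) m hm1 (by omega) (by omega)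
  calc a j * descProd a (i + 1) 1
      = a j * (descProd a (i + 1) (j + 2) * ((a (j + 1) * a j) * descProd a (j - 1) 1)) := by
        rw [hsplit1, hsplit2, hmid]
    _ = descProd a (i + 1) (j + 2) * ((a j * a (j + 1) * a j) * descProd a (j - 1) 1) := by
        rw [← mul_assoc, hc1.eq]
        simp [mul_assoc]
    _ = descProd a (i + 1) (j + 2) * ((a (j + 1) * a j * a (j + 1)) * descProd a (j - 1) 1) := by
        rw [hbraid j hj (by omega)]
    _ = descProd a (i + 1) (j + 2) * ((a (j + 1) * a j) * descProd a (j - 1) 1) * a (j + 1) := by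
        simp only [mul_assoc]
        rw [hc2.eq]
    _ = descProd a (i + 1) 1 * a (j + 1) := by rw [hsplit1, hsplit2, hmid]
end

section
/- In the braid group B_3 with generators a_1 < a_2 and deg-lex order on words, the set S = { a_2 a_1 a_2 − a_1 a_2 a_1 } ∪ { a_2 a_1^l a_2 a_1 − a_1 a_2 a_1^2 a_2^{l-1} : l ≥ 2 } is closed under the composition on the ambiguity w = a_2 a_1 a_2 a_1 a_2: the composition of the first relation with itself on w reduces to zero modulo S. -/
/-- The deg-lex order on words in the letters a₁ < a₂ (encoded as lists of
booleans, `false` for a₁, `true` for a₂): first compare lengths, then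
lexicographically. -/
def DegLexWords (l m : List Bool) : Prop :=
  l.length < m.length ∨ (l.length = m.length ∧ List.Lex (· < ·) l m)

theorem braid_relation_mul_sub_mul_braid_relation {R : Type*} [Ring R] (x y : R) :
    (x * y * x - y * x * y) * (y * x) - (x * y) * (x * y * x - y * x * y)
      = x * y * y * x * y - y * x * y * y * x := by
  noncomm_ring

/-- The composition (f,f)_w is itself the l = 2 relation of S, whose leading word lies below w,
so a single elimination reduces it to zero. -/
theorem braid3_composition_reduces (k : Type*) [Field k] :
    (let a1 : FreeAlgebra k Bool := FreeAlgebra.ι k false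
     let a2 : FreeAlgebra k Bool := FreeAlgebra.ι k true
     let f := a2 * a1 * a2 - a1 * a2 * a1
     f * (a1 * a2) - (a2 * a1) * f
       = (a2 * a1 * a1 * a2 * a1 - a1 * a2 * a1 * a1 * a2)) ∧
    DegLexWords [true, false, false, true, false] [true, false, true, false, true] :=
  ⟨braid_relation_mul_sub_mul_braid_relation _ _, Or.inr ⟨rfl, by decide⟩⟩
end
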